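/- arXiv:math/0702443 — 4 statements merged into one kernel-verified Lean document; each statement's English description precedes it below -/
import Mathlib

section
/- Let L be a complete lattice of finite height in which every element is a finite join of atoms, and let λ : L → L be a complete join-homomorphism such that for every x ∈ L the restriction λ : [⊥, x] → [⊥, λ(x)] is surjective. Then for every atom a ≤ λ(⊤) there exists an atom a* ∈ L with λ(a*) = a. -/
/-- In a complete lattice of finite height in which every element is a finite
join of atoms (JNB1), if the complete join-homomorphism `lam` restricts to a
surjection `[⊥, x] → [⊥, lam x]` for every `x` (JNB3), then every atom
`a ≤ lam ⊤` is the `lam`-image of some atom of `L`. -/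
theorem stmt_5 {L : Type*} [CompleteLattice L] (lam : L → L)
    (hhom : ∀ S : Set L, lam (sSup S) = sSup (lam '' S))
    (hJNB1h : ∃ n : ℕ, ∀ l : List L, l.Chain' (· < ·) → l.length ≤ n + 1)
    (hJNB1a : ∀ x : L, ∃ s : Finset L, (∀ b ∈ s, IsAtom b) ∧ x = s.sup id)
    (hJNB3 : ∀ x y : L, y ≤ lam x → ∃ u : L, u ≤ x ∧ lam u = y)
    (a : L) (ha : IsAtom a) (hle : a ≤ lam ⊤) :
    ∃ astar : L, IsAtom astar ∧ lam astar = a := by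
  obtain ⟨u, -, hu⟩ := hJNB3 ⊤ a hle
  obtain ⟨s, hs, rfl⟩ := hJNB1a u
  have hsup : lam (s.sup id) = sSup (lam '' ↑s) := by
    rw [Finset.sup_id_eq_sSup, hhom]
  -- each lam b is ≤ a
  have hba : ∀ b ∈ s, lam b ≤ a := by
    intro b hb
    rw [← hu, hsup]
    exact le_sSup ⟨b, hb, rfl⟩
  by_cases h : ∃ b ∈ s, lam b = a
  · obtain ⟨b, hb, hba⟩ := h
    exact ⟨b, hs b hb, hba⟩
  · exfalso
    push_neg at h
    have hbot : ∀ b ∈ s, lam b = ⊥ := fun b hb =>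
      ((ha.le_iff).1 (hba b hb)).resolve_right (h b hb)
    have : lam (s.sup id) = ⊥ := by
      rw [hsup]
      apply le_bot_iff.1
      apply sSup_le
      rintro y ⟨b, hb, rfl⟩
      exact (hbot b hb).le
    exact ha.1 (hu ▸ this)
end

section
/- Let L be a lattice with ⊥ satisfying: (i) for every x ∈ L and every atom a with x ≠ x ∨ a, the element x ∨ a covers x; (ii) any two finite maximal chains from ⊥ to a common element have the same length. If a_1,…,a_n are atoms of L such that for some permutation π of {1,…,n} the chain a_{π(1)} < a_{π(1)} ∨ a_{π(2)} < … < a_{π(1)} ∨ … ∨ a_{π(n)} is strictly ascending, then the join a_1 ∨ … ∨ a_n is irredundant: for every j, removing a_j strictly decreases the join. -/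
private lemma aux_chain {L : Type*} [Lattice L] [OrderBot L]
    (hcover : ∀ (x : L) (a : L), IsAtom a → x ≠ x ⊔ a → x ⋖ x ⊔ a)
    {ι : Type*} (s : Finset ι) (f : ι → L) (hf : ∀ i ∈ s, IsAtom (f i)) :
    ∃ k ≤ s.card, ∃ c : ℕ → L, c 0 = ⊥ ∧ (∀ i < k, c i ⋖ c (i+1)) ∧ c k = s.sup f := by
  induction s using Finset.cons_induction with
  | empty => exact ⟨0, le_refl _, fun _ => ⊥, rfl, by omega, by simp⟩
  | cons x s hx ih =>
    obtain ⟨k, hk, c, hc0, hcov, hck⟩ := ih (fun i hi => hf i (Finset.mem_cons_of_mem hi))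
    have hax := hf x (Finset.mem_cons_self _ _)
    have hsup : (Finset.cons x s hx).sup f = s.sup f ⊔ f x := by
      rw [Finset.sup_cons, sup_comm]
    by_cases h : s.sup f = s.sup f ⊔ f x
    · exact ⟨k, le_trans hk (by simp), c, hc0, hcov, by rw [hsup, ← h, hck]⟩
    · refine ⟨k + 1, by simp [Finset.card_cons]; omega, 
        fun i => if i ≤ k then c i else s.sup f ⊔ f x, by simp [hc0], ?_, by simp [hsup]⟩
      intro i hi
      rcases lt_or_eq_of_le (Nat.lt_succ_iff.mp hi) with h1 | h1
      · simpa [Nat.le_of_lt h1, Nat.succ_le_of_lt h1] using hcov i h1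
      · subst h1
        simpa [hck] using hcover (s.sup f) (f x) hax h

/-- In a lattice with `⊥` having the atomic cover property and the
Jordan–Hölder condition on maximal chains from `⊥`, if the partial joins of a
family of atoms (in some order given by a permutation `π`) form a strictly
ascending chain, then the join of the family is irredundant: removing any
member strictly decreases the join. -/
theorem stmt_8 {L : Type*} [Lattice L] [OrderBot L]
    (hcover : ∀ (x : L) (a : L), IsAtom a → x ≠ x ⊔ a → x ⋖ x ⊔ a)
    (hJH : ∀ (n m : ℕ) (c d : ℕ → L), c 0 = ⊥ → d 0 = ⊥ →
      (∀ i < n, c i ⋖ c (i + 1)) → (∀ i < m, d i ⋖ d (i + 1)) →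
      c n = d m → n = m)
    (n : ℕ) (a : Fin n → L) (ha : ∀ i, IsAtom (a i))
    (π : Equiv.Perm (Fin n))
    (hchain : ∀ j : Fin n, ∀ h : j.val + 1 < n,
      (Finset.Iic j).sup (fun i => a (π i)) <
        (Finset.Iic (⟨j.val + 1, h⟩ : Fin n)).sup (fun i => a (π i))) :
    ∀ j : Fin n, (Finset.univ.erase j).sup a < Finset.univ.sup a := by
  intro j
  have hn : 0 < n := j.pos
  -- the long chain
  set c : ℕ → L := fun i => (Finset.univ.filter (fun t : Fin n => t.val < i)).sup
    (fun t => a (π t)) with hc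
  have hc0 : c 0 = ⊥ := by simp [hc]
  have hstep : ∀ i (hi : i < n), c (i + 1) = c i ⊔ a (π ⟨i, hi⟩) := by
    intro i hi
    have : (Finset.univ.filter (fun t : Fin n => t.val < i + 1)) =
        insert ⟨i, hi⟩ (Finset.univ.filter (fun t : Fin n => t.val < i)) := by
      ext t
      simp only [Finset.mem_filter, Finset.mem_insert, Finset.mem_univ, true_and,
        Fin.ext_iff, and_true]
      omega
    rw [hc]
    simp only [this, Finset.sup_insert]
    exact sup_comm _ _
  have hIic : ∀ i (hi : i < n), (Finset.univ.filter (fun t : Fin n => t.val < i + 1)) =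
      Finset.Iic (⟨i, hi⟩ : Fin n) := by
    intro i hi
    ext t
    simp only [Finset.mem_filter, Finset.mem_univ, true_and, Finset.mem_Iic, Fin.le_def]
    omega
  have hcovs : ∀ i < n, c i ⋖ c (i + 1) := by
    intro i hi
    have hne : c i ≠ c i ⊔ a (π ⟨i, hi⟩) := by
      rcases Nat.eq_zero_or_pos i with h0 | h0
      · subst h0
        rw [hc0]
        simp only [bot_sup_eq]
        exact fun h => (ha (π ⟨0, hn⟩)).1 h.symm
      · have hi1 : (i - 1) + 1 < n := by omega
        have hch := hchain ⟨i - 1, by omega⟩ hi1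
        have e1 : c i = (Finset.Iic (⟨i - 1, by omega⟩ : Fin n)).sup (fun t => a (π t)) := by
          have h1 : (i - 1) + 1 = i := by omega
          rw [hc]
          simp only [← hIic (i-1) (by omega), h1]
        have efin : (⟨(i-1) + 1, hi1⟩ : Fin n) = ⟨i, hi⟩ := by
          apply Fin.ext; simp; omega
        have e2 : c (i + 1) = (Finset.Iic (⟨(i-1) + 1, hi1⟩ : Fin n)).sup (fun t => a (π t)) := by
          rw [hc]
          simp only [efin, ← hIic i hi]
        rw [← hstep i hi, e1, e2]
        exact ne_of_lt hch
    rw [hstep i hi]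
    exact hcover _ _ (ha _) hne
  have hcn : c n = Finset.univ.sup a := by
    have : (Finset.univ.filter (fun t : Fin n => t.val < n)) = Finset.univ := by
      ext t; simp [t.isLt]
    rw [hc]
    simp only [this]
    apply le_antisymm
    · exact Finset.sup_le fun t _ => Finset.le_sup (Finset.mem_univ _)
    · refine Finset.sup_le fun t _ => ?_
      have : a t = a (π (π.symm t)) := by simp
      rw [this]
      exact Finset.le_sup (f := fun t => a (π t)) (Finset.mem_univ (π.symm t))
  -- suppose equality
  refine lt_of_le_of_ne (Finset.sup_mono (Finset.erase_subset _ _)) fun heq => ?_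
  obtain ⟨k, hk, d, hd0, hdcov, hdk⟩ := aux_chain hcover (Finset.univ.erase j) a
    (fun i _ => ha i)
  have hkcard : k ≤ n - 1 := by
    simpa [Finset.card_erase_of_mem, Finset.card_univ] using hk
  have := hJH n k c d hc0 hd0 hcovs hdcov (by rw [hcn, ← heq, hdk])
  omega
end

section
/- Let R be a ring, M a finitely generated semisimple left R-module, and φ : M → M a nilpotent R-endomorphism. Then there exist elements x_i^{(t)} ∈ M for 1 ≤ t ≤ r, 1 ≤ i ≤ k_t such that each cyclic submodule R·x_i^{(t)} is simple, M is the internal direct sum ⊕_{t,i} R·x_i^{(t)}, and φ(x_i^{(t)}) = x_{i-1}^{(t)} for 2 ≤ i ≤ k_t while φ(x_1^{(t)}) = 0 for every t. -/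
/-!
Induction on the nilpotency index. Suppose `φ(N) ⊆ N` and the submodule `φ(N)` already has a
Jordan base. Lift the top of each chain along `φ` to an element of `N` spanning a simple submodule
(possible by semisimplicity), and complete `ker φ ∩ φ(N)` by independent simple submodules to all
of `ker φ ∩ N`; each of these becomes a new chain of length one. Since `φ` maps the new family onto
the old one, every term of a vanishing sum of members lies in `ker φ`, where the members of the new
family shrink to submodules of old ones (a lifted top meets `ker φ` trivially) or are the added
simple submodules, and these are independent as they complement `ker φ ∩ φ(N)`. The span is
obtained in the same way, as `N` is generated by the lifts modulo `ker φ ∩ N`.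
-/

open Submodule

universe v

section Lattice

variable {α ι κ : Type*} [CompleteLattice α]

theorem iSupIndep.of_le_comp {t : κ → α} (ht : iSupIndep t) {p : ι → α} (g : ι → κ)
    (hg : Set.InjOn g {i | p i ≠ ⊥}) (hp : ∀ i, p i ≤ t (g i)) : iSupIndep p := by
  rw [← iSupIndep_ne_bot]
  exact (ht.comp hg.injective).mono fun i => hp i

theorem iSupIndep.sumElim [IsModularLattice α] {f : ι → α} {g : κ → α} (hf : iSupIndep f)
    (hg : iSupIndep g) (hfg : Disjoint (⨆ i, f i) (⨆ j, g j)) : iSupIndep (Sum.elim f g) := by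
  rintro (i | j)
  · refine ((hf i).disjoint_sup_right_of_disjoint_sup_left
      (hfg.mono_left (sup_le (le_iSup f i) (iSup₂_le fun i _ => le_iSup f i)))).mono_right
      (iSup₂_le ?_)
    rintro (i' | j') h
    · exact le_sup_of_le_left (le_iSup₂_of_le i' (fun h' => h (congrArg _ h')) le_rfl)
    · exact le_sup_of_le_right (le_iSup g j')
  · refine ((hg j).disjoint_sup_right_of_disjoint_sup_left
      (hfg.symm.mono_left (sup_le (le_iSup g j) (iSup₂_le fun j _ => le_iSup g j)))).mono_right
      (iSup₂_le ?_)
    rintro (i' | j') h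
    · exact le_sup_of_le_right (le_iSup f i')
    · exact le_sup_of_le_left (le_iSup₂_of_le j' (fun h' => h (congrArg _ h')) le_rfl)

theorem iSup_comp_eq_of_forall_ne_bot_mem_range {p : κ → α} (g : ι → κ)
    (hg : ∀ k, p k ≠ ⊥ → k ∈ Set.range g) : ⨆ i, p (g i) = ⨆ k, p k := by
  refine le_antisymm (iSup_comp_le p g) (iSup_le fun k => ?_)
  obtain hk | hk := eq_or_ne (p k) ⊥
  · exact hk ▸ bot_le
  · obtain ⟨i, rfl⟩ := hg k hk
    exact le_iSup (p ∘ g) i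

end Lattice

section Module

variable {R M M' : Type*} [Ring R] [AddCommGroup M] [Module R M] [AddCommGroup M'] [Module R M']

theorem iSupIndep.of_map_of_inf_ker {ι : Type*} (f : M →ₗ[R] M') {p : ι → Submodule R M}
    (hmap : iSupIndep fun i => (p i).map f) (hker : iSupIndep fun i => p i ⊓ LinearMap.ker f) :
    iSupIndep p := by
  rw [iSupIndep_iff_finsetSum_eq_zero_imp_eq_zero] at hmap hker ⊢
  intro s x hx hsum
  have hfx : ∀ i ∈ s, f (x i) = 0 :=
    hmap s (f ∘ x) (fun i hi => mem_map_of_mem (hx i hi)) (by simp [← map_sum, hsum])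
  exact hker s x (fun i hi => ⟨hx i hi, hfx i hi⟩) hsum

theorem iSup_eq_of_map_le_of_ker_inf_le {ι : Type*} (f : M →ₗ[R] M') {p : ι → Submodule R M}
    {N : Submodule R M} (hp : ∀ i, p i ≤ N) (hmap : N.map f ≤ ⨆ i, (p i).map f)
    (hker : LinearMap.ker f ⊓ N ≤ ⨆ i, p i) : ⨆ i, p i = N := by
  have hN : N ≤ (⨆ i, p i) ⊔ LinearMap.ker f := by
    rw [← comap_map_eq, Submodule.map_iSup]
    exact map_le_iff_le_comap.mp hmap
  refine le_antisymm (iSup_le hp) ?_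
  calc N ≤ ((⨆ i, p i) ⊔ LinearMap.ker f) ⊓ N := le_inf hN le_rfl
    _ = (⨆ i, p i) ⊔ LinearMap.ker f ⊓ N := sup_inf_assoc_of_le _ (iSup_le hp)
    _ ≤ ⨆ i, p i := sup_le le_rfl hker

theorem span_singleton_eq_of_isAtom {A : Submodule R M} (hA : IsAtom A) {x : M} (hx : x ∈ A)
    (hx0 : x ≠ 0) : span R {x} = A :=
  (hA.le_iff.mp ((span_singleton_le_iff_mem x A).mpr hx)).resolve_left
    (by rwa [span_singleton_eq_bot])

theorem isAtom_span_singleton_apply (f : M →ₗ[R] M') {m : M} (hm : IsAtom (span R {m}))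
    (hfm : f m ≠ 0) : IsAtom (span R {f m}) := by
  refine ⟨by rwa [Ne, span_singleton_eq_bot], fun B hB => ?_⟩
  have hbot : span R {m} ⊓ B.comap f = ⊥ := by
    refine (hm.le_iff.mp inf_le_left).resolve_right fun h => hB.not_ge ?_
    rw [span_singleton_le_iff_mem]
    exact (inf_eq_left.mp h (mem_span_singleton_self m) : m ∈ B.comap f)
  rw [eq_bot_iff]
  intro b hb
  obtain ⟨r, rfl⟩ := mem_span_singleton.mp (hB.le hb)
  have hrm : r • m ∈ span R {m} ⊓ B.comap f :=
    ⟨smul_mem _ r (mem_span_singleton_self m), by simpa using hb⟩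
  rw [hbot, mem_bot] at hrm
  rw [← map_smul, hrm, map_zero]
  exact zero_mem _

theorem exists_isAtom_le_map_eq [IsSemisimpleModule R M] (f : M →ₗ[R] M') {S : Submodule R M}
    {T : Submodule R M'} (hT : IsAtom T) (hTS : T ≤ S.map f) :
    ∃ A ≤ S, IsAtom A ∧ A.map f = T := by
  by_contra! h
  have hker : S ⊓ T.comap f ≤ LinearMap.ker f := by
    rw [← sSup_atoms_le_eq (S ⊓ T.comap f)]
    refine sSup_le fun A ⟨hA, hAle⟩ => LinearMap.le_ker_iff_map.mpr ?_
    exact (hT.le_iff.mp (map_le_iff_le_comap.mpr (hAle.trans inf_le_right))).resolve_right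
      (h A (hAle.trans inf_le_left) hA)
  refine hT.1 (eq_bot_iff.mpr fun y hy => ?_)
  obtain ⟨x, hxS, rfl⟩ := hTS hy
  exact (mem_bot R).mpr (hker ⟨hxS, hy⟩)

theorem exists_mem_isAtom_span_singleton_apply_eq [IsSemisimpleModule R M] (f : M →ₗ[R] M')
    {S : Submodule R M} {y : M'} (hy : IsAtom (span R {y})) (hyS : y ∈ S.map f) :
    ∃ c ∈ S, IsAtom (span R {c}) ∧ f c = y := by
  obtain ⟨A, hAS, hA, hAy⟩ :=
    exists_isAtom_le_map_eq f hy ((span_singleton_le_iff_mem _ _).mpr hyS)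
  obtain ⟨c, hcA, rfl⟩ : y ∈ A.map f := hAy ▸ mem_span_singleton_self y
  have hc0 : c ≠ 0 := by
    rintro rfl
    exact hy.1 (by simp)
  exact ⟨c, hAS hcA, span_singleton_eq_of_isAtom hA hcA hc0 ▸ hA, rfl⟩

end Module

section Jordan

variable {R : Type*} {M : Type v} [Ring R] [AddCommGroup M] [Module R M] (φ : M →ₗ[R] M)
  {ι κ : Type*}

/-- Chains are indexed by all of `ℕ`: the members `(φ ^ j) (v a)` past the end of the chain with
top `v a` are `0` and span `⊥`. -/
def chainSpan (v : ι → M) (q : ι × ℕ) : Submodule R M := span R {(φ ^ q.2) (v q.1)}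

/-- A Jordan base of `N` recorded by the tops of its chains; only the tops are required to span
simple submodules, the other nonzero chain members then do so automatically. -/
structure IsJordanBase (N : Submodule R M) (v : ι → M) : Prop where
  isAtom : ∀ a, IsAtom (span R {v a})
  independent : iSupIndep (chainSpan φ v)
  iSup_eq : ⨆ q, chainSpan φ v q = N

-- `0` when no power of `φ` kills `m`
noncomputable def chainLength (m : M) : ℕ := sInf {j | (φ ^ j) m = 0}

variable {φ}

theorem map_chainSpan (v : ι → M) (q : ι × ℕ) :
    (chainSpan φ v q).map φ = chainSpan φ (φ ∘ v) q := by
  simp only [chainSpan, map_span, Set.image_singleton, Function.comp_apply,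
    ← Module.End.mul_apply, ← pow_succ', pow_succ]

theorem chainSpan_succ (v : ι → M) (a : ι) (j : ℕ) :
    chainSpan φ v (a, j + 1) = chainSpan φ (φ ∘ v) (a, j) := by
  simp only [chainSpan, Function.comp_apply, ← Module.End.mul_apply, ← pow_succ]

theorem chainSpan_zero_snd (v : ι → M) (a : ι) : chainSpan φ v (a, 0) = span R {v a} := by
  simp [chainSpan]

theorem chainSpan_le (v : ι → M) (q : ι × ℕ) {N : Submodule R M} (hN : N.map φ ≤ N)
    (hv : v q.1 ∈ N) : chainSpan φ v q ≤ N :=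
  (span_singleton_le_iff_mem _ _).mpr
    (Module.End.pow_apply_mem_of_forall_mem _ (fun _ hx => hN (mem_map_of_mem hx)) _ hv)

theorem IsJordanBase.mem {N : Submodule R M} {v : ι → M} (hv : IsJordanBase φ N v) (a : ι) :
    v a ∈ N :=
  hv.iSup_eq ▸ le_iSup (chainSpan φ v) (a, 0) (by simp [chainSpan, mem_span_singleton_self])

theorem IsJordanBase.ne_zero {N : Submodule R M} {v : ι → M} (hv : IsJordanBase φ N v) (a : ι) :
    v a ≠ 0 := by
  simpa using (hv.isAtom a).1

theorem isJordanBase_bot : IsJordanBase φ ⊥ (PEmpty.elim : PEmpty → M) where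
  isAtom := nofun
  independent := fun q => nomatch q.1
  iSup_eq := by simp

theorem chainSpan_zero_inf_ker {c : ι → M} {a : ι} (hc : IsAtom (span R {c a}))
    (hφc : φ (c a) ≠ 0) : chainSpan φ c (a, 0) ⊓ LinearMap.ker φ = ⊥ := by
  rw [chainSpan_zero_snd]
  refine (hc.le_iff.mp inf_le_left).resolve_right fun h => hφc ?_
  exact (inf_eq_left.mp h (mem_span_singleton_self (c a)) : c a ∈ LinearMap.ker φ)

theorem chainSpan_inf_ker_le {c : ι → M} (hc : ∀ a, IsAtom (span R {c a}))
    (hφc : ∀ a, φ (c a) ≠ 0) (q : ι × ℕ) :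
    chainSpan φ c q ⊓ LinearMap.ker φ ≤ chainSpan φ (φ ∘ c) (q.1, q.2 - 1) ⊓ LinearMap.ker φ := by
  obtain ⟨a, _ | j⟩ := q
  · exact (chainSpan_zero_inf_ker (hc a) (hφc a)).symm ▸ bot_le
  · rw [chainSpan_succ]
    rfl

theorem iSupIndep_chainSpan_inf_ker {c : ι → M} (hc : ∀ a, IsAtom (span R {c a}))
    (hφc : ∀ a, φ (c a) ≠ 0) (h : iSupIndep (chainSpan φ (φ ∘ c))) :
    iSupIndep fun q => chainSpan φ c q ⊓ LinearMap.ker φ := by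
  have hpos : ∀ q : ι × ℕ, chainSpan φ c q ⊓ LinearMap.ker φ ≠ ⊥ → q.2 ≠ 0 := by
    rintro ⟨a, j⟩ hq rfl
    exact hq (chainSpan_zero_inf_ker (hc a) (hφc a))
  refine (h.mono fun _ => inf_le_left).of_le_comp (fun q => (q.1, q.2 - 1)) ?_
    (chainSpan_inf_ker_le hc hφc)
  rintro ⟨a, j⟩ hq ⟨a', j'⟩ hq' heq
  have hj : j ≠ 0 := hpos _ hq
  have hj' : j' ≠ 0 := hpos _ hq'
  simp only [Prod.mk.injEq] at heq ⊢
  exact ⟨heq.1, by omega⟩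

theorem exists_isJordanBase_of_sSupIndep {s : Set (Submodule R M)} (hs : sSupIndep s)
    (hatoms : ∀ A ∈ s, IsAtom A) (hker : sSup s ≤ LinearMap.ker φ) :
    ∃ z : s → M, IsJordanBase φ (sSup s) z := by
  choose z hzs hz0 using fun A : s => exists_mem_ne_zero_of_ne_bot (hatoms A A.2).1
  have hzA : ∀ A : s, span R {z A} = A := fun A =>
    span_singleton_eq_of_isAtom (hatoms A A.2) (hzs A) (hz0 A)
  have hφz : φ ∘ z = 0 := funext fun A => hker (le_sSup A.2 (hzs A))
  have hle : ∀ q : s × ℕ, chainSpan φ z q ≤ q.1 := by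
    rintro ⟨A, _ | j⟩
    · rw [chainSpan_zero_snd, hzA]
    · rw [chainSpan_succ, hφz]
      simp [chainSpan]
  have hpos : ∀ q : s × ℕ, chainSpan φ z q ≠ ⊥ → q.2 = 0 := by
    rintro ⟨A, _ | j⟩ hq
    · rfl
    · rw [chainSpan_succ, hφz] at hq
      simp [chainSpan] at hq
  refine ⟨z, fun A => hzA A ▸ hatoms A A.2, ?_, ?_⟩
  · refine ((sSupIndep_iff s).mp hs).of_le_comp Prod.fst ?_ hle
    rintro ⟨A, j⟩ hq ⟨A', j'⟩ hq' (heq : A = A')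
    simp only [Prod.mk.injEq]
    exact ⟨heq, (hpos _ hq).trans (hpos _ hq').symm⟩
  · refine le_antisymm (iSup_le fun q => (hle q).trans (le_sSup q.1.2)) (sSup_le fun A hA => ?_)
    exact le_iSup_of_le (⟨A, hA⟩, 0) (by rw [chainSpan_zero_snd, hzA])

theorem iSupIndep_comp_chainSpan_sumElim (F : Submodule R M → Submodule R M) {v : ι → M}
    {w : κ → M} (hv : iSupIndep (F ∘ chainSpan φ v)) (hw : iSupIndep (F ∘ chainSpan φ w))
    (hvw : Disjoint (⨆ q, F (chainSpan φ v q)) (⨆ q, F (chainSpan φ w q))) :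
    iSupIndep (F ∘ chainSpan φ (Sum.elim v w)) := by
  have h : F ∘ chainSpan φ (Sum.elim v w) =
      Sum.elim (F ∘ chainSpan φ v) (F ∘ chainSpan φ w) ∘ Equiv.sumProdDistrib ι κ ℕ := by
    funext ⟨ab, j⟩
    cases ab <;> rfl
  rw [h]
  exact (hv.sumElim hw hvw).comp (Equiv.injective _)

theorem IsJordanBase.sumElim {N Z : Submodule R M} (hN : N.map φ ≤ N) {c : ι → M}
    (hv : IsJordanBase φ (N.map φ) (φ ∘ c)) (hcN : ∀ a, c a ∈ N)
    (hc : ∀ a, IsAtom (span R {c a})) {z : κ → M} (hz : IsJordanBase φ Z z)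
    (hdisj : Disjoint (N.map φ ⊓ LinearMap.ker φ) Z)
    (hsup : N.map φ ⊓ LinearMap.ker φ ⊔ Z = LinearMap.ker φ ⊓ N) :
    IsJordanBase φ N (Sum.elim c z) := by
  have hZ : Z ≤ LinearMap.ker φ ⊓ N := hsup ▸ le_sup_right
  have hφcz : φ ∘ Sum.elim c z = Sum.elim (φ ∘ c) 0 := by
    funext ab
    cases ab with
    | inl a => rfl
    | inr b => exact (hZ (hz.mem b)).1
  refine ⟨?_, ?_, ?_⟩
  · rintro (a | b)
    exacts [hc a, hz.isAtom b]
  · have h0 : chainSpan φ (0 : κ → M) = ⊥ := by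
      funext q
      simp [chainSpan]
    refine iSupIndep.of_map_of_inf_ker φ ?_ ?_
    · simp only [map_chainSpan]
      rw [hφcz]
      exact iSupIndep_comp_chainSpan_sumElim id hv.independent
        (by rw [h0]; exact fun _ => disjoint_bot_left) (by simp [h0])
    · refine iSupIndep_comp_chainSpan_sumElim (· ⊓ LinearMap.ker φ)
        (iSupIndep_chainSpan_inf_ker hc hv.ne_zero hv.independent)
        (hz.independent.mono fun _ => inf_le_left) ?_
      refine hdisj.mono (iSup_le fun q => (chainSpan_inf_ker_le hc hv.ne_zero q).trans ?_)
        (hz.iSup_eq ▸ iSup_mono fun _ => inf_le_left)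
      exact inf_le_inf_right _ (hv.iSup_eq ▸ le_iSup (chainSpan φ (φ ∘ c)) _)
  · refine iSup_eq_of_map_le_of_ker_inf_le φ (fun q => chainSpan_le _ q hN ?_) ?_ ?_
    · obtain ⟨a | b, j⟩ := q
      exacts [hcN a, (hZ (hz.mem b)).2]
    · simp only [map_chainSpan, hφcz]
      exact hv.iSup_eq ▸ iSup_le fun q => le_iSup_of_le (Sum.inl q.1, q.2) le_rfl
    · rw [← hsup]
      refine sup_le (inf_le_left.trans (hv.iSup_eq ▸ iSup_le fun q => ?_))
        (hz.iSup_eq ▸ iSup_le fun q => le_iSup_of_le (Sum.inr q.1, q.2) le_rfl)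
      refine le_iSup_of_le (Sum.inl q.1, q.2 + 1) ?_
      rw [chainSpan_succ, hφcz]
      rfl

theorem IsJordanBase.exists_of_map [IsSemisimpleModule R M] {N : Submodule R M}
    (hN : N.map φ ≤ N) {ι : Type v} {v : ι → M} (hv : IsJordanBase φ (N.map φ) v) :
    ∃ (κ : Type v) (w : κ → M), IsJordanBase φ N w := by
  choose c hcN hc hφc using fun a =>
    exists_mem_isAtom_span_singleton_apply_eq φ (hv.isAtom a) (hv.mem a)
  obtain ⟨s, hs, hdisj, hsup, hatoms⟩ :=
    exists_sSupIndep_disjoint_sSup_atoms (N.map φ ⊓ LinearMap.ker φ) (LinearMap.ker φ ⊓ N)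
      (le_inf inf_le_right (inf_le_left.trans hN))
      (by simpa only [and_comm] using sSup_atoms_le_eq (LinearMap.ker φ ⊓ N))
  obtain ⟨z, hz⟩ := exists_isJordanBase_of_sSupIndep hs hatoms
    ((le_sup_right.trans hsup.le).trans inf_le_left)
  obtain rfl : φ ∘ c = v := funext hφc
  exact ⟨ι ⊕ s, _, hv.sumElim hN hcN hc hz hdisj hsup⟩

variable (φ) in
theorem exists_isJordanBase [IsSemisimpleModule R M] (n : ℕ) (N : Submodule R M)
    (hN : N.map φ ≤ N) (hNn : N.map (φ ^ n) = ⊥) :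
    ∃ (ι : Type v) (v : ι → M), IsJordanBase φ N v := by
  induction n generalizing N with
  | zero =>
    rw [pow_zero, Module.End.one_eq_id, map_id] at hNn
    exact ⟨PEmpty, PEmpty.elim, hNn ▸ isJordanBase_bot⟩
  | succ n ih =>
    obtain ⟨ι, v, hv⟩ := ih (N.map φ) (map_mono hN)
      (by rw [← map_comp, ← Module.End.mul_eq_comp, ← pow_succ, hNn])
    exact hv.exists_of_map hN

theorem IsJordanBase.finite [IsNoetherian R M] {N : Submodule R M} {v : ι → M}
    (hv : IsJordanBase φ N v) : Finite ι :=
  WellFoundedGT.finite_of_iSupIndep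
    (hv.independent.comp (f := fun a => (a, 0)) fun _ _ h => congrArg Prod.fst h)
    fun a => by simpa [chainSpan] using hv.ne_zero a

theorem IsJordanBase.comp_equiv {N : Submodule R M} {v : ι → M} (hv : IsJordanBase φ N v)
    (e : κ ≃ ι) : IsJordanBase φ N (v ∘ e) := by
  have h : chainSpan φ (v ∘ e) = chainSpan φ v ∘ Equiv.prodCongr e (Equiv.refl ℕ) := rfl
  refine ⟨fun a => hv.isAtom (e a), ?_, ?_⟩
  · rw [h]
    exact hv.independent.comp (Equiv.injective _)
  · rw [h, ← hv.iSup_eq]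
    exact (Equiv.prodCongr e (Equiv.refl ℕ)).iSup_comp

theorem IsJordanBase.exists_nat [Finite ι] {N : Submodule R M} {v : ι → M}
    (hv : IsJordanBase φ N v) :
    ∃ (r : ℕ) (u : ℕ → M), IsJordanBase φ N fun t : {t : ℕ // 1 ≤ t ∧ t ≤ r} => u t := by
  obtain ⟨r, ⟨e⟩⟩ := Finite.exists_equiv_fin ι
  let σ : {t : ℕ // 1 ≤ t ∧ t ≤ r} ≃ ι :=
    { toFun t := e.symm ⟨t - 1, by omega⟩
      invFun a := ⟨e a + 1, by omega⟩
      left_inv t := by ext; simp; omega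
      right_inv a := by simp }
  refine ⟨r, fun t => if h : 1 ≤ t ∧ t ≤ r then v (σ ⟨t, h⟩) else 0, ?_⟩
  convert hv.comp_equiv σ using 1
  funext t
  exact dif_pos t.2

variable {m : M}

theorem pow_chainLength_apply (h : ∃ j, (φ ^ j) m = 0) : (φ ^ chainLength φ m) m = 0 :=
  Nat.sInf_mem h

theorem pow_apply_ne_zero_of_lt_chainLength {j : ℕ} (hj : j < chainLength φ m) :
    (φ ^ j) m ≠ 0 :=
  Nat.notMem_of_lt_sInf hj

theorem lt_chainLength_of_pow_apply_ne_zero (h : ∃ j, (φ ^ j) m = 0) {j : ℕ}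
    (hj : (φ ^ j) m ≠ 0) : j < chainLength φ m := by
  by_contra! hle
  rw [← pow_sub_mul_pow φ hle, Module.End.mul_apply, pow_chainLength_apply h, map_zero] at hj
  exact hj rfl

/-- Here chain members are numbered from the bottom, as in the Jordan normal form. -/
theorem IsJordanBase.iSupIndep_and_iSup_eq_nat {N : Submodule R M} {r : ℕ} {u : ℕ → M}
    (hu : IsJordanBase φ N fun t : {t : ℕ // 1 ≤ t ∧ t ≤ r} => u t)
    (hnil : ∀ m : M, ∃ j, (φ ^ j) m = 0) :
    iSupIndep (fun p : {p : ℕ × ℕ // 1 ≤ p.1 ∧ p.1 ≤ r ∧ 1 ≤ p.2 ∧ p.2 ≤ chainLength φ (u p.1)} =>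
        span R {(φ ^ (chainLength φ (u p.1.1) - p.1.2)) (u p.1.1)}) ∧
      (⨆ p : {p : ℕ × ℕ // 1 ≤ p.1 ∧ p.1 ≤ r ∧ 1 ≤ p.2 ∧ p.2 ≤ chainLength φ (u p.1)},
        span R {(φ ^ (chainLength φ (u p.1.1) - p.1.2)) (u p.1.1)}) = N := by
  let g (p : {p : ℕ × ℕ // 1 ≤ p.1 ∧ p.1 ≤ r ∧ 1 ≤ p.2 ∧ p.2 ≤ chainLength φ (u p.1)}) :
      {t : ℕ // 1 ≤ t ∧ t ≤ r} × ℕ :=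
    (⟨p.1.1, p.2.1, p.2.2.1⟩, chainLength φ (u p.1.1) - p.1.2)
  have hg : Function.Injective g := by
    rintro ⟨⟨t, i⟩, ht⟩ ⟨⟨t', i'⟩, ht'⟩ h
    dsimp only at ht ht'
    simp only [g, Prod.mk.injEq, Subtype.mk.injEq] at h
    obtain ⟨rfl, h⟩ := h
    simp only [Subtype.mk.injEq, Prod.mk.injEq, true_and]
    omega
  have hrange : ∀ q, chainSpan φ (fun t : {t : ℕ // 1 ≤ t ∧ t ≤ r} => u t) q ≠ ⊥ →
      q ∈ Set.range g := by
    rintro ⟨t, j⟩ hq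
    have hj := lt_chainLength_of_pow_apply_ne_zero (hnil (u t)) (by simpa [chainSpan] using hq)
    refine ⟨⟨(t, chainLength φ (u t) - j), t.2.1, t.2.2, by omega, by dsimp only; omega⟩,
      Prod.ext rfl (by simp only [g]; omega)⟩
  have hF : (fun p : {p : ℕ × ℕ // 1 ≤ p.1 ∧ p.1 ≤ r ∧ 1 ≤ p.2 ∧ p.2 ≤ chainLength φ (u p.1)} =>
      span R {(φ ^ (chainLength φ (u p.1.1) - p.1.2)) (u p.1.1)}) =
      chainSpan φ (fun t : {t : ℕ // 1 ≤ t ∧ t ≤ r} => u t) ∘ g := rfl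
  rw [hF, ← hu.iSup_eq]
  exact ⟨hu.independent.comp hg, iSup_comp_eq_of_forall_ne_bot_mem_range g hrange⟩

end Jordan

/-- Jordan normal base for a nilpotent endomorphism `φ` of a finitely
generated semisimple module `M`: there are elements `x t i` (`1 ≤ t ≤ r`,
`1 ≤ i ≤ k t`) such that each cyclic submodule `R·(x t i)` is simple, `M` is
the internal direct sum of these cyclic submodules, and
`φ (x t i) = x t (i-1)`, `φ (x t 1) = 0`. -/
theorem stmt_13 {R M : Type*} [Ring R] [AddCommGroup M] [Module R M]
    [IsSemisimpleModule R M] [Module.Finite R M]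
    (φ : M →ₗ[R] M) (hnilp : ∃ k : ℕ, 1 ≤ k ∧ (φ ^ k : M →ₗ[R] M) = 0) :
    ∃ (r : ℕ) (k : ℕ → ℕ) (x : ℕ → ℕ → M),
      (∀ t i, 1 ≤ t → t ≤ r → 1 ≤ i → i ≤ k t →
        IsSimpleModule R (Submodule.span R {x t i})) ∧
      iSupIndep
        (fun p : {p : ℕ × ℕ // 1 ≤ p.1 ∧ p.1 ≤ r ∧ 1 ≤ p.2 ∧ p.2 ≤ k p.1} =>
          Submodule.span R {x p.1.1 p.1.2}) ∧
      (⨆ p : {p : ℕ × ℕ // 1 ≤ p.1 ∧ p.1 ≤ r ∧ 1 ≤ p.2 ∧ p.2 ≤ k p.1},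
          Submodule.span R {x p.1.1 p.1.2}) = ⊤ ∧
      (∀ t i, 1 ≤ t → t ≤ r → 2 ≤ i → i ≤ k t → φ (x t i) = x t (i - 1)) ∧
      (∀ t, 1 ≤ t → t ≤ r → φ (x t 1) = 0) := by
  obtain ⟨n, -, hn⟩ := hnilp
  have hnil : ∀ m : M, ∃ j, (φ ^ j) m = 0 := fun m => ⟨n, by rw [hn, LinearMap.zero_apply]⟩
  obtain ⟨ι, v, hv⟩ := exists_isJordanBase φ n ⊤ le_top (by rw [hn, Submodule.map_zero])
  have := hv.finite
  obtain ⟨r, u, hu⟩ := hv.exists_nat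
  have hpos : ∀ t, 1 ≤ t → t ≤ r → 0 < chainLength φ (u t) := fun t h1 h2 =>
    lt_chainLength_of_pow_apply_ne_zero (hnil _) (by simpa using hu.ne_zero ⟨t, h1, h2⟩)
  refine ⟨r, fun t => chainLength φ (u t), fun t i => (φ ^ (chainLength φ (u t) - i)) (u t),
    fun t i h1 h2 h3 h4 => ?_, (hu.iSupIndep_and_iSup_eq_nat hnil).1,
    (hu.iSupIndep_and_iSup_eq_nat hnil).2, fun t i _ _ h3 h4 => ?_, fun t h1 h2 => ?_⟩
  · dsimp only at h4
    rw [isSimpleModule_iff_isAtom]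
    exact isAtom_span_singleton_apply _ (hu.isAtom ⟨t, h1, h2⟩)
      (pow_apply_ne_zero_of_lt_chainLength (by omega))
  · dsimp only at h4 ⊢
    rw [← Module.End.mul_apply, ← pow_succ']
    congr 2
    omega
  · rw [← Module.End.mul_apply, ← pow_succ', Nat.sub_add_cancel (hpos t h1 h2)]
    exact pow_chainLength_apply (hnil _)
end

section
/- Let L be a complete lattice of finite height n with a complete join-homomorphism λ : L → L satisfying conditions JNB1–JNB3. If λ is nilpotent and w = λ(⊤), then the interval [⊥, w] is a complete lattice of height at most n − 1, the restriction λ* of λ to [⊥, w] maps [⊥, w] into itself, is a complete join-homomorphism, and the pair ([⊥, w], λ*) again satisfies JNB1–JNB3. -/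
/-!
Since `lam` is monotone, every `lam x` lies below `w = lam ⊤`. Nilpotency forces `w < ⊤` unless
`L` is trivial, so a strict chain in `[⊥, w]` can be extended by `⊤`, which bounds the height of
the interval by `n - 1`. The join-homomorphism property and JNB1–JNB3 pass to the interval because
suprema, atoms and the relevant witnesses of `L` below `w` are the same in `[⊥, w]`.
-/

open Set

theorem List.IsChain.length_le_one_of_subsingleton {α : Type*} [Preorder α] [Subsingleton α]
    {l : List α} (hl : l.IsChain (· < ·)) : l.length ≤ 1 := by
  match l, hl with
  | [], _ | [_], _ => simp
  | a :: b :: _, hl =>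
    exact absurd (List.isChain_cons_cons.1 hl).1 (by simp [Subsingleton.elim a b])

theorem Function.eq_of_iterate_eq_const {α : Type*} {f : α → α} {m : ℕ} {c x : α}
    (hm : f^[m] = fun _ => c) (hx : f x = x) : x = c := by
  simpa [Function.iterate_fixed hx] using congrFun hm x

theorem Set.Iic.length_le_of_isChain {L : Type*} [Preorder L] [OrderTop L] {n : ℕ}
    (hheight : ∀ l : List L, l.IsChain (· < ·) → l.length ≤ n + 1) {w : L} (hw : w < ⊤)
    {l : List (Iic w)} (hl : l.IsChain (· < ·)) : l.length ≤ n := by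
  have hext : (l.map Subtype.val ++ [⊤]).IsChain (· < ·) := by
    refine List.isChain_append.2 ⟨(List.isChain_map _).2 hl, List.isChain_singleton _, ?_⟩
    intro x hx y hy
    obtain ⟨z, -, rfl⟩ := List.mem_map.1 (List.mem_of_mem_getLast? hx)
    obtain rfl : ⊤ = y := by simpa using hy
    exact z.2.trans_lt hw
  simpa using hheight _ hext

namespace Set.Iic

variable {L : Type*} [CompleteLattice L] {w : L}

theorem exists_finset_atoms_sup_eq
    (h : ∀ x : L, ∃ s : Finset L, (∀ b ∈ s, IsAtom b) ∧ x = s.sup id) (x : Iic w) :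
    ∃ s : Finset (Iic w), (∀ b ∈ s, IsAtom b) ∧ x = s.sup id := by
  classical
  obtain ⟨s, hatoms, hx⟩ := h x
  have hs : ∀ b ∈ s, b ∈ Iic w := fun b hb => (Finset.le_sup (f := id) hb).trans (hx ▸ x.2)
  refine ⟨s.subtype (· ∈ Iic w), fun b hb => (hatoms b (Finset.mem_subtype.1 hb)).Iic b.2,
    Subtype.ext ?_⟩
  calc (x : L) = ((s.subtype (· ∈ Iic w)).map (.subtype _)).sup id := by
        rw [Finset.subtype_map_of_mem hs, hx]
    _ = _ := by
        rw [Finset.sup_map, Finset.apply_sup_eq_sup_comp Subtype.val (fun _ _ => rfl) rfl]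
        rfl

variable {f : L → L} {g : Iic w → Iic w}

theorem map_sSup_of_coe_map (hg : ∀ x, (g x : L) = f x)
    (hf : ∀ S : Set L, f (sSup S) = sSup (f '' S)) (S : Set (Iic w)) :
    g (sSup S) = sSup (g '' S) := by
  apply Subtype.ext
  rw [hg, coe_sSup, coe_sSup, hf, image_image, image_image]
  simp only [hg]

theorem exists_sup_eq_of_map_eq_of_coe_map (hg : ∀ x, (g x : L) = f x)
    (hf : ∀ x y : L, x ≤ y → f x = f y → ∃ u : L, y = x ⊔ u ∧ f u = ⊥)
    {x y : Iic w} (hxy : x ≤ y) (hgxy : g x = g y) :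
    ∃ u : Iic w, y = x ⊔ u ∧ g u = ⊥ := by
  obtain ⟨u, hy, hu⟩ := hf x y hxy (by rw [← hg, ← hg, hgxy])
  have huw : u ≤ w := (le_sup_right.trans hy.ge).trans y.2
  exact ⟨⟨u, huw⟩, Subtype.ext hy, Subtype.ext ((hg _).trans hu)⟩

theorem exists_le_map_eq_of_coe_map (hg : ∀ x, (g x : L) = f x)
    (hf : ∀ x y : L, y ≤ f x → ∃ u : L, u ≤ x ∧ f u = y)
    {x y : Iic w} (hyx : y ≤ g x) : ∃ u : Iic w, u ≤ x ∧ g u = y := by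
  obtain ⟨u, hux, hu⟩ := hf x y (hg x ▸ hyx)
  exact ⟨⟨u, hux.trans x.2⟩, hux, Subtype.ext ((hg _).trans hu)⟩

end Set.Iic

theorem stmt_15_general {L : Type*} [CompleteLattice L] (lam : L → L)
    (hhom : ∀ S : Set L, lam (sSup S) = sSup (lam '' S))
    (n : ℕ)
    (hheight : ∀ l : List L, l.Chain' (· < ·) → l.length ≤ n + 1)
    (hJNB1a : ∀ x : L, ∃ s : Finset L, (∀ b ∈ s, IsAtom b) ∧ x = s.sup id)
    (hJNB2 : ∀ x y : L, x ≤ y → lam x = lam y →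
      ∃ u : L, y = x ⊔ u ∧ lam u = ⊥)
    (hJNB3 : ∀ x y : L, y ≤ lam x → ∃ u : L, u ≤ x ∧ lam u = y)
    (hnilp : ∃ m : ℕ, 1 ≤ m ∧ lam^[m] = fun _ => (⊥ : L))
    (w : L) (hw : w = lam ⊤) :
    -- `lam` maps the interval `[⊥, w]` into itself
    (∀ x : L, x ≤ w → lam x ≤ w) ∧
    -- the interval has height at most `n - 1`
    (∀ l : List (Set.Iic w), l.Chain' (· < ·) → l.length ≤ (n - 1) + 1) ∧
    -- any restriction of `lam` to the interval is a complete
    -- join-homomorphism satisfying JNB1, JNB2 and JNB3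
    (∀ lam' : Set.Iic w → Set.Iic w, (∀ x : Set.Iic w, (lam' x : L) = lam x) →
      (∀ S : Set (Set.Iic w), lam' (sSup S) = sSup (lam' '' S)) ∧
      (∀ x : Set.Iic w, ∃ s : Finset (Set.Iic w),
        (∀ b ∈ s, IsAtom b) ∧ x = s.sup id) ∧
      (∀ x y : Set.Iic w, x ≤ y → lam' x = lam' y →
        ∃ u : Set.Iic w, y = x ⊔ u ∧ lam' u = ⊥) ∧
      (∀ x y : Set.Iic w, y ≤ lam' x → ∃ u : Set.Iic w, u ≤ x ∧ lam' u = y)) := by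
  have hmono : Monotone lam := OrderHomClass.mono (⟨lam, hhom⟩ : sSupHom L L)
  refine ⟨fun x _ => hw ▸ hmono le_top, fun l hl => ?_, fun lam' hres =>
    ⟨Iic.map_sSup_of_coe_map hres hhom, Iic.exists_finset_atoms_sup_eq hJNB1a,
      fun _ _ => Iic.exists_sup_eq_of_map_eq_of_coe_map hres hJNB2,
      fun _ _ => Iic.exists_le_map_eq_of_coe_map hres hJNB3⟩⟩
  rcases (le_top : w ≤ ⊤).lt_or_eq with hlt | htop
  · exact (Iic.length_le_of_isChain hheight hlt hl).trans (by omega)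
  · obtain ⟨m, -, hm⟩ := hnilp
    have : Subsingleton L :=
      subsingleton_of_bot_eq_top (Function.eq_of_iterate_eq_const hm (hw ▸ htop)).symm
    exact hl.length_le_one_of_subsingleton.trans (by omega)

/-- If `(L, lam)` satisfies JNB1–JNB3 with `L` of height at most `n` and `lam`
a nilpotent complete join-homomorphism, then with `w = lam ⊤` the interval
`[⊥, w]` is mapped into itself by `lam`, the interval (a complete lattice)
has height at most `n - 1`, and any restriction `lam*` of `lam` to `[⊥, w]`
is again a complete join-homomorphism satisfying JNB1–JNB3. -/
theorem stmt_15 {L : Type*} [CompleteLattice L] (lam : L → L)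
    (hhom : ∀ S : Set L, lam (sSup S) = sSup (lam '' S))
    (n : ℕ) (hn : 1 ≤ n)
    (hheight : ∀ l : List L, l.Chain' (· < ·) → l.length ≤ n + 1)
    (hJNB1a : ∀ x : L, ∃ s : Finset L, (∀ b ∈ s, IsAtom b) ∧ x = s.sup id)
    (hJNB2 : ∀ x y : L, x ≤ y → lam x = lam y →
      ∃ u : L, y = x ⊔ u ∧ lam u = ⊥)
    (hJNB3 : ∀ x y : L, y ≤ lam x → ∃ u : L, u ≤ x ∧ lam u = y)
    (hnilp : ∃ m : ℕ, 1 ≤ m ∧ lam^[m] = fun _ => (⊥ : L))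
    (w : L) (hw : w = lam ⊤) :
    -- `lam` maps the interval `[⊥, w]` into itself
    (∀ x : L, x ≤ w → lam x ≤ w) ∧
    -- the interval has height at most `n - 1`
    (∀ l : List (Set.Iic w), l.Chain' (· < ·) → l.length ≤ (n - 1) + 1) ∧
    -- any restriction of `lam` to the interval is a complete
    -- join-homomorphism satisfying JNB1, JNB2 and JNB3
    (∀ lam' : Set.Iic w → Set.Iic w, (∀ x : Set.Iic w, (lam' x : L) = lam x) →
      (∀ S : Set (Set.Iic w), lam' (sSup S) = sSup (lam' '' S)) ∧
      (∀ x : Set.Iic w, ∃ s : Finset (Set.Iic w),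
        (∀ b ∈ s, IsAtom b) ∧ x = s.sup id) ∧
      (∀ x y : Set.Iic w, x ≤ y → lam' x = lam' y →
        ∃ u : Set.Iic w, y = x ⊔ u ∧ lam' u = ⊥) ∧
      (∀ x y : Set.Iic w, y ≤ lam' x → ∃ u : Set.Iic w, u ≤ x ∧ lam' u = y)) :=
  stmt_15_general lam hhom n hheight hJNB1a hJNB2 hJNB3 hnilp w hw
end
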